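/- arXiv:1303.6428 — 3 statements merged into one kernel-verified Lean document; each statement's English description precedes it below -/
import Mathlib

section
/- (Yoneda lemma for distance spaces) Let A be a distance space and ρ : A → [0,∞] a right sequence, i.e. d_A(x,y) + ρ(y) ≥ ρ(x) for all x,y. Then for every a ∈ A: ρ(a) = sup_{x ∈ A} (d_A(x,a) ⊸ ρ(x)), i.e. ρ(a) equals the distance in the space of right sequences from the representable sequence ∇a = d_A(−,a) to ρ. -/
open ENNReal

/-- Yoneda lemma for distance spaces: for a right sequence `ρ`,
`ρ(a) = sup_x (d(x,a) ⊸ ρ(x))`, the distance from `∇a = d(−,a)` to `ρ`. -/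
theorem stmt_11 {A : Type*} (dA : A → A → ℝ≥0∞)
    (hrefl : ∀ x, dA x x = 0)
    (htrans : ∀ x y z, dA x z ≤ dA x y + dA y z)
    (ρ : A → ℝ≥0∞) (hρ : ∀ x y, ρ x ≤ dA x y + ρ y) (a : A) :
    ρ a = ⨆ x, ρ x - dA x a := by
  apply le_antisymm
  · calc ρ a = ρ a - dA a a := by rw [hrefl a, tsub_zero]
    _ ≤ ⨆ x, ρ x - dA x a := le_iSup (fun x => ρ x - dA x a) a
  · exact iSup_le fun x => tsub_le_iff_left.mpr (hρ x a)
end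

section
/- Let Φ : A° × B → [0,∞] be a distance matrix between distance spaces A and B, i.e. d_A(u,x) + Φ(x,y) + d_B(y,v) ≥ Φ(u,v) for all u,x ∈ A, y,v ∈ B. Define Φ‡(y,x) = sup_{u∈A, v∈B} Φ(u,v) ⊸ (d_A(u,x) + d_B(y,v)). Then for all x, x' ∈ A: inf_{y ∈ B} (Φ(x,y) + Φ‡(y,x')) ≥ d_A(x,x'), and for all y, y' ∈ B: inf_{x ∈ A} (Φ‡(y,x) + Φ(x,y')) ≥ d_B(y,y'). -/
open ENNReal

/-- The paper's `Φ‡`; its truncated subtraction `a ⊸ b` is `b - a` in `ℝ≥0∞`. -/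
noncomputable def distMatrixDual {A B : Type*} (dA : A → A → ℝ≥0∞) (dB : B → B → ℝ≥0∞)
    (Φ : A → B → ℝ≥0∞) (y : B) (x : A) : ℝ≥0∞ :=
  ⨆ u : A, ⨆ v : B, (dA u x + dB y v) - Φ u v

section DistMatrixDual

variable {A B : Type*} (dA : A → A → ℝ≥0∞) (dB : B → B → ℝ≥0∞) (Φ : A → B → ℝ≥0∞)

theorem tsub_le_distMatrixDual (u : A) (v : B) (y : B) (x : A) :
    (dA u x + dB y v) - Φ u v ≤ distMatrixDual dA dB Φ y x :=
  le_iSup₂_of_le (f := fun u v => (dA u x + dB y v) - Φ u v) u v le_rfl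

theorem le_add_distMatrixDual (hBrefl : ∀ y, dB y y = 0) (x x' : A) (y : B) :
    dA x x' ≤ Φ x y + distMatrixDual dA dB Φ y x' := by
  have h := tsub_le_distMatrixDual dA dB Φ x y y x'
  rw [hBrefl, add_zero] at h
  exact le_add_tsub.trans (add_le_add_right h _)

theorem le_distMatrixDual_add (hArefl : ∀ x, dA x x = 0) (y y' : B) (x : A) :
    dB y y' ≤ distMatrixDual dA dB Φ y x + Φ x y' := by
  have h := tsub_le_distMatrixDual dA dB Φ x y' y x
  rw [hArefl, zero_add] at h
  exact le_tsub_add.trans (add_le_add_left h _)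

end DistMatrixDual

theorem stmt_17_general {A B : Type*} (dA : A → A → ℝ≥0∞) (dB : B → B → ℝ≥0∞)
    (hArefl : ∀ x, dA x x = 0)
    (hBrefl : ∀ x, dB x x = 0)
    (Φ : A → B → ℝ≥0∞) :
    (∀ x x' : A, dA x x' ≤ ⨅ y : B, Φ x y +
        ⨆ u : A, ⨆ v : B, (dA u x' + dB y v) - Φ u v) ∧
    (∀ y y' : B, dB y y' ≤ ⨅ x : A,
        (⨆ u : A, ⨆ v : B, (dA u x + dB y v) - Φ u v) + Φ x y') :=
  ⟨fun x x' => le_iInf (le_add_distMatrixDual dA dB Φ hBrefl x x'),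
    fun y y' => le_iInf (le_distMatrixDual_add dA dB Φ hArefl y y')⟩

theorem stmt_17 {A B : Type*} (dA : A → A → ℝ≥0∞) (dB : B → B → ℝ≥0∞)
    (hArefl : ∀ x, dA x x = 0)
    (hAtrans : ∀ x y z, dA x z ≤ dA x y + dA y z)
    (hBrefl : ∀ x, dB x x = 0)
    (hBtrans : ∀ x y z, dB x z ≤ dB x y + dB y z)
    (Φ : A → B → ℝ≥0∞)
    (hΦ : ∀ u x y v, Φ u v ≤ dA u x + Φ x y + dB y v) :
    (∀ x x' : A, dA x x' ≤ ⨅ y : B, Φ x y +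
        ⨆ u : A, ⨆ v : B, (dA u x' + dB y v) - Φ u v) ∧
    (∀ y y' : B, dB y y' ≤ ⨅ x : A,
        (⨆ u : A, ⨆ v : B, (dA u x + dB y v) - Φ u v) + Φ x y') :=
  stmt_17_general dA dB hArefl hBrefl Φ
end

section
/- Let Φ : A° × B → [0,∞] be a distance matrix, and define Φ* : ↓A → ↑B by (Φ*ρ)(b) = sup_{x∈A} ρ(x) ⊸ Φ(x,b), and Φ_* : ↑B → ↓A by (Φ_*λ)(a) = sup_{y∈B} λ(y) ⊸ Φ(a,y). Then for the representable sequences ∇x = d_A(−,x) and Δy = d_B(y,−): d_{↑B}(Φ*(∇x), Δy) = Φ(x,y) = d_{↓A}(∇x, Φ_*(Δy)). -/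
open ENNReal

theorem stmt_19 {A B : Type*} (dA : A → A → ℝ≥0∞) (dB : B → B → ℝ≥0∞)
    (hArefl : ∀ x, dA x x = 0)
    (hAtrans : ∀ x y z, dA x z ≤ dA x y + dA y z)
    (hBrefl : ∀ x, dB x x = 0)
    (hBtrans : ∀ x y z, dB x z ≤ dB x y + dB y z)
    (Φ : A → B → ℝ≥0∞)
    (hΦ : ∀ u x y v, Φ u v ≤ dA u x + Φ x y + dB y v)
    (x : A) (y : B) :
    -- d_{↑B}(Φ*(∇x), Δy) = Φ(x,y), where (Φ*ρ)(b) = sup_u ρ(u) ⊸ Φ(u,b),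
    -- ∇x = dA(−,x), Δy = dB(y,−), and d_{↑B}(λ,θ) = sup_v θ(v) ⊸ λ(v)
    (⨆ v : B, (⨆ u : A, Φ u v - dA u x) - dB y v) = Φ x y ∧
    -- d_{↓A}(∇x, Φ_*(Δy)) = Φ(x,y), where (Φ_*λ)(a) = sup_v λ(v) ⊸ Φ(a,v),
    -- and d_{↓A}(ρ,μ) = sup_u ρ(u) ⊸ μ(u)
    (⨆ u : A, (⨆ v : B, Φ u v - dB y v) - dA u x) = Φ x y := by
  have h1 : ∀ v, (⨆ u, Φ u v - dA u x) = Φ x v := by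
    intro v
    refine le_antisymm (iSup_le fun u => tsub_le_iff_right.mpr ?_) ?_
    · have := hΦ u x v v
      rw [hBrefl v, add_zero] at this
      calc Φ u v ≤ dA u x + Φ x v := this
        _ = Φ x v + dA u x := add_comm _ _
    · have := le_iSup (fun u => Φ u v - dA u x) x
      rwa [hArefl x, tsub_zero] at this
  have h2 : ∀ u, (⨆ v, Φ u v - dB y v) = Φ u y := by
    intro u
    refine le_antisymm (iSup_le fun v => tsub_le_iff_right.mpr ?_) ?_
    · have := hΦ u u y v
      rwa [hArefl u, zero_add] at this
    · have := le_iSup (fun v => Φ u v - dB y v) y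
      rwa [hBrefl y, tsub_zero] at this
  constructor
  · simp only [h1]
    refine le_antisymm (iSup_le fun v => tsub_le_iff_right.mpr ?_) ?_
    · have := hΦ x x y v
      rwa [hArefl x, zero_add] at this
    · have := le_iSup (fun v => Φ x v - dB y v) y
      rwa [hBrefl y, tsub_zero] at this
  · simp only [h2]
    refine le_antisymm (iSup_le fun u => tsub_le_iff_right.mpr ?_) ?_
    · have := hΦ u x y y
      rw [hBrefl y, add_zero] at this
      calc Φ u y ≤ dA u x + Φ x y := this
        _ = Φ x y + dA u x := add_comm _ _
    · have := le_iSup (fun u => Φ u y - dA u x) x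
      rwa [hArefl x, tsub_zero] at this
end
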